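/- Let K be an isolated non-saddle compact invariant set of a flow on a locally compact metric space. If K has an externally dissonant point, then K has a positively dissonant point and a negatively dissonant point. -/

import Mathlib

open Set Filter Topology

variable {M : Type*}

/-- The positive semi-trajectory `γ⁺(x)`. -/
def posOrbit [TopologicalSpace M] (φ : Flow ℝ M) (x : M) : Set M :=
  {y | ∃ t : ℝ, 0 ≤ t ∧ φ t x = y}

/-- The negative semi-trajectory `γ⁻(x)`. -/
def negOrbit [TopologicalSpace M] (φ : Flow ℝ M) (x : M) : Set M :=
  {y | ∃ t : ℝ, t ≤ 0 ∧ φ t x = y}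

/-- The omega-limit set `ω(x) = ⋂_{t>0} closure (x·[t,∞))`. -/
def omegaLim [TopologicalSpace M] (φ : Flow ℝ M) (x : M) : Set M :=
  ⋂ t ∈ Set.Ioi (0:ℝ), closure {y | ∃ s : ℝ, t ≤ s ∧ φ s x = y}

/-- The negative omega-limit set `ω*(x) = ⋂_{t<0} closure (x·(-∞,t])`. -/
def alphaLim [TopologicalSpace M] (φ : Flow ℝ M) (x : M) : Set M :=
  ⋂ t ∈ Set.Iio (0:ℝ), closure {y | ∃ s : ℝ, s ≤ t ∧ φ s x = y}

/-- `K` is invariant under the flow. -/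
def FlowInvariant [TopologicalSpace M] (φ : Flow ℝ M) (K : Set M) : Prop :=
  ∀ x ∈ K, ∀ t : ℝ, φ t x ∈ K

/-- `K` is a compact invariant set which is the maximal invariant subset of some
compact neighborhood (an isolated invariant compactum). -/
def IsIsolatedInv [TopologicalSpace M] (φ : Flow ℝ M) (K : Set M) : Prop :=
  IsCompact K ∧ FlowInvariant φ K ∧
    ∃ N : Set M, IsCompact N ∧ K ⊆ interior N ∧
      ∀ x ∈ N, (∀ t : ℝ, φ t x ∈ N) → x ∈ K

/-- `K` is saddle: it admits a neighborhood `U` such that every neighborhood `V` of `K`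
contains a point whose positive and negative semi-trajectories both leave `U`. -/
def Saddle [TopologicalSpace M] (φ : Flow ℝ M) (K : Set M) : Prop :=
  ∃ U : Set M, K ⊆ interior U ∧ ∀ V : Set M, K ⊆ interior V →
    ∃ x ∈ V, ¬ posOrbit φ x ⊆ U ∧ ¬ negOrbit φ x ⊆ U

/-- `K` is non-saddle: every neighborhood `U` of `K` contains a neighborhood `V` of `K`
such that every point of `V` has `γ⁺(x) ⊆ U` or `γ⁻(x) ⊆ U`. -/
def NonSaddle [TopologicalSpace M] (φ : Flow ℝ M) (K : Set M) : Prop :=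
  ∀ U : Set M, K ⊆ interior U → ∃ V : Set M, K ⊆ interior V ∧ V ⊆ U ∧
    ∀ x ∈ V, posOrbit φ x ⊆ U ∨ negOrbit φ x ⊆ U

/-- The stable manifold (region of attraction) `A(K)`. -/
def Aset [TopologicalSpace M] (φ : Flow ℝ M) (K : Set M) : Set M :=
  {x | (omegaLim φ x).Nonempty ∧ omegaLim φ x ⊆ K}

/-- The unstable manifold (region of repulsion) `R(K)`. -/
def Rset [TopologicalSpace M] (φ : Flow ℝ M) (K : Set M) : Set M :=
  {x | (alphaLim φ x).Nonempty ∧ alphaLim φ x ⊆ K}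

/-- The region of influence `I(K) = A(K) ∪ R(K)`. -/
def Iset [TopologicalSpace M] (φ : Flow ℝ M) (K : Set M) : Set M :=
  Aset φ K ∪ Rset φ K

/-- `H(K) = A(K) ∩ R(K)`. -/
def Hset [TopologicalSpace M] (φ : Flow ℝ M) (K : Set M) : Set M :=
  Aset φ K ∩ Rset φ K

/-- The positive prolongational limit set `J⁺(x)`. -/
def Jplus [TopologicalSpace M] (φ : Flow ℝ M) (x : M) : Set M :=
  {y | ∃ (xs : ℕ → M) (ts : ℕ → ℝ), Tendsto xs atTop (𝓝 x) ∧
    Tendsto ts atTop atTop ∧ Tendsto (fun n => φ (ts n) (xs n)) atTop (𝓝 y)}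

/-- The negative prolongational limit set `J⁻(x)`. -/
def Jminus [TopologicalSpace M] (φ : Flow ℝ M) (x : M) : Set M :=
  {y | ∃ (xs : ℕ → M) (ts : ℕ → ℝ), Tendsto xs atTop (𝓝 x) ∧
    Tendsto ts atTop atBot ∧ Tendsto (fun n => φ (ts n) (xs n)) atTop (𝓝 y)}

/-- The two-sided prolongational limit set `J*(x)`. -/
def Jstar [TopologicalSpace M] (φ : Flow ℝ M) (x : M) : Set (M × M) :=
  {p | ∃ (xs : ℕ → M) (ts ss : ℕ → ℝ), Tendsto xs atTop (𝓝 x) ∧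
    Tendsto ts atTop atTop ∧ Tendsto ss atTop atBot ∧
    Tendsto (fun n => φ (ts n) (xs n)) atTop (𝓝 p.1) ∧
    Tendsto (fun n => φ (ss n) (xs n)) atTop (𝓝 p.2)}

/-- `x ∈ I(K)` is positively dissonant. -/
def PosDissonant [TopologicalSpace M] (φ : Flow ℝ M) (K : Set M) (x : M) : Prop :=
  x ∈ Iset φ K ∧ x ∉ Aset φ K ∧ (Jplus φ x ∩ K).Nonempty

/-- `x ∈ I(K)` is negatively dissonant. -/
def NegDissonant [TopologicalSpace M] (φ : Flow ℝ M) (K : Set M) (x : M) : Prop :=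
  x ∈ Iset φ K ∧ x ∉ Rset φ K ∧ (Jminus φ x ∩ K).Nonempty

/-- `x ∉ I(K)` is externally dissonant. -/
def ExtDissonant [TopologicalSpace M] (φ : Flow ℝ M) (K : Set M) (x : M) : Prop :=
  x ∉ Iset φ K ∧ (Jstar φ x ∩ K ×ˢ K).Nonempty

/-- `x` is a dissonant point of `K`. -/
def Dissonant [TopologicalSpace M] (φ : Flow ℝ M) (K : Set M) (x : M) : Prop :=
  PosDissonant φ K x ∨ NegDissonant φ K x ∨ ExtDissonant φ K x

/-- `N` is an isolating block for `K` with entrance set `Ni` and exit set `No`. -/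
structure IsolatingBlock [TopologicalSpace M] (φ : Flow ℝ M) (K N Ni No : Set M) : Prop where
  compact_N : IsCompact N
  nbhd : K ⊆ interior N
  maximal : ∀ x ∈ N, (∀ t : ℝ, φ t x ∈ N) → x ∈ K
  compact_Ni : IsCompact Ni
  compact_No : IsCompact No
  Ni_sub : Ni ⊆ frontier N
  No_sub : No ⊆ frontier N
  cover : frontier N = Ni ∪ No
  entrance : ∀ x ∈ Ni, ∃ ε > (0:ℝ), ∀ t ∈ Set.Ico (-ε) (0:ℝ), φ t x ∉ N
  exitSet : ∀ x ∈ No, ∃ δ > (0:ℝ), ∀ t ∈ Set.Ioc (0:ℝ) δ, φ t x ∉ N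
  tang_neg : ∀ x ∈ frontier N \ Ni, ∃ ε > (0:ℝ), ∀ t ∈ Set.Ico (-ε) (0:ℝ), φ t x ∈ interior N
  tang_pos : ∀ x ∈ frontier N \ No, ∃ δ > (0:ℝ), ∀ t ∈ Set.Ioc (0:ℝ) δ, φ t x ∈ interior N

/-- `p` is strongly influenced by `K`. -/
def StronglyInfluenced [TopologicalSpace M] (φ : Flow ℝ M) (K : Set M) (p : M) : Prop :=
  ∃ U ∈ 𝓝 p, ∀ V : Set M, K ⊆ interior V → ∃ T : ℝ, 0 ≤ T ∧ ∀ x ∈ U,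
    (∀ t : ℝ, T ≤ t → φ t x ∈ V) ∨ (∀ t : ℝ, t ≤ -T → φ t x ∈ V)

/-- `p` is strongly attracted by `K`. -/
def StronglyAttracted [TopologicalSpace M] (φ : Flow ℝ M) (K : Set M) (p : M) : Prop :=
  ∃ U ∈ 𝓝 p, ∀ V : Set M, K ⊆ interior V → ∃ T : ℝ, 0 ≤ T ∧ ∀ x ∈ U,
    ∀ t : ℝ, T ≤ t → φ t x ∈ V

/-- `p` is strongly repelled by `K`. -/
def StronglyRepelled [TopologicalSpace M] (φ : Flow ℝ M) (K : Set M) (p : M) : Prop :=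
  ∃ U ∈ 𝓝 p, ∀ V : Set M, K ⊆ interior V → ∃ T : ℝ, 0 ≤ T ∧ ∀ x ∈ U,
    ∀ t : ℝ, t ≤ -T → φ t x ∈ V

/-- `K` is (positively) stable. -/
def IsStable [TopologicalSpace M] (φ : Flow ℝ M) (K : Set M) : Prop :=
  ∀ U : Set M, K ⊆ interior U → ∃ V : Set M, K ⊆ interior V ∧ V ⊆ U ∧
    ∀ x ∈ V, ∀ t : ℝ, 0 ≤ t → φ t x ∈ V

/-- `K` is negatively stable. -/
def IsNegStable [TopologicalSpace M] (φ : Flow ℝ M) (K : Set M) : Prop :=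
  ∀ U : Set M, K ⊆ interior U → ∃ V : Set M, K ⊆ interior V ∧ V ⊆ U ∧
    ∀ x ∈ V, ∀ t : ℝ, t ≤ 0 → φ t x ∈ V

/-- `K` is an attractor: stable and attracting some neighborhood. -/
def IsAttractor [TopologicalSpace M] (φ : Flow ℝ M) (K : Set M) : Prop :=
  IsStable φ K ∧ ∃ W : Set M, K ⊆ interior W ∧ W ⊆ Aset φ K

/-- `K` is a repeller: negatively stable and repelling some neighborhood. -/
def IsRepeller [TopologicalSpace M] (φ : Flow ℝ M) (K : Set M) : Prop :=
  IsNegStable φ K ∧ ∃ W : Set M, K ⊆ interior W ∧ W ⊆ Rset φ K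

/-!
Let `xₙ → x`, `xₙ·tₙ → y ∈ K`, `xₙ·sₙ → z ∈ K` witness the external dissonance of `x`. Take a
compact neighbourhood `W` of `K` inside `I(K)` (non-saddleness applied to an isolating
neighbourhood), so that `x ∉ W`, and a neighbourhood `U` of `K` whose points have a semi-orbit
inside `W`. As `xₙ ∉ W`, the point `xₙ·sₙ ∈ U` has its backward semi-orbit in `W`; let `ρₙ ≤ 0` be
the largest time such that the backward semi-orbit of `xₙ·ρₙ` lies in `W`. A limit `q` of the
`xₙ·ρₙ` has its backward semi-orbit in `W`, hence `q ∈ R(K)`, and `y ∈ J⁺(q)`. If `q` were in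
`A(K)`, some `q·T` with `T > 0` would lie in `U`; non-saddleness at `xₙ·(ρₙ + T)` then confines
`ρₙ` to `[-T, 0]`, so `q` lies on the orbit of `x` and `x ∈ A(K)`. The negatively dissonant point
is the positively dissonant point of the reversed flow.
-/

open omegaLimit

section Orbits

variable [TopologicalSpace M] (φ : Flow ℝ M)

theorem omegaLim_eq_omegaLimit (x : M) : omegaLim φ x = ω⁺ φ {x} := by
  refine Subset.antisymm (iInter₂_mono' fun u hu => ?_) (iInter₂_mono' fun t _ => ?_)
  · obtain ⟨a, ha⟩ := mem_atTop_sets.1 hu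
    refine ⟨max a 1, mem_Ioi.2 (lt_max_of_lt_right one_pos), closure_mono ?_⟩
    rintro _ ⟨s, hs, rfl⟩
    exact mem_image2_of_mem (ha s (le_of_max_le_left hs)) rfl
  · refine ⟨Ici t, Ici_mem_atTop t, closure_mono ?_⟩
    rintro _ ⟨s, hs, _, rfl, rfl⟩
    exact ⟨s, hs, rfl⟩

theorem omegaLim_flow (r : ℝ) (x : M) : omegaLim φ (φ r x) = omegaLim φ x := by
  simp only [omegaLim_eq_omegaLimit, ← image_singleton]
  exact Flow.omegaLimit_image_eq atTop φ {x}
    (fun t => tendsto_atTop_add_const_right _ t tendsto_id) r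

theorem flow_mem_Aset_iff {K : Set M} (r : ℝ) (x : M) : φ r x ∈ Aset φ K ↔ x ∈ Aset φ K := by
  rw [Aset, mem_ofPred_eq, mem_ofPred_eq, omegaLim_flow]

theorem frequently_flow_mem_of_mem_Aset {K O : Set M} {x : M} (hx : x ∈ Aset φ K)
    (hO : IsOpen O) (hKO : K ⊆ O) : ∃ᶠ t in atTop, φ t x ∈ O := by
  obtain ⟨w, hw⟩ := hx.1
  have hwO : O ∈ 𝓝 w := hO.mem_nhds (hKO (hx.2 hw))
  rw [omegaLim_eq_omegaLimit, mem_omegaLimit_iff_frequently] at hw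
  simpa using hw O hwO

theorem mem_Aset_of_posOrbit_subset [T2Space M] {K N C : Set M}
    (hN : ∀ x ∈ N, (∀ t : ℝ, φ t x ∈ N) → x ∈ K) (hC : IsCompact C) (hCN : C ⊆ N) {x : M}
    (hx : posOrbit φ x ⊆ C) : x ∈ Aset φ K := by
  rw [Aset, mem_ofPred_eq, omegaLim_eq_omegaLimit]
  have habs : closure (image2 φ (Ici 0) {x}) ⊆ C := by
    refine closure_minimal ?_ hC.isClosed
    rintro _ ⟨t, ht, _, rfl, rfl⟩
    exact hx ⟨t, ht, rfl⟩
  have hsub : ω⁺ φ {x} ⊆ C :=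
    (omegaLimit_subset_closure_image2 _ _ _ (Ici_mem_atTop 0)).trans habs
  have hinv : IsInvariant φ (ω⁺ φ {x}) :=
    Flow.isInvariant_omegaLimit _ _ _ fun t => tendsto_atTop_add_const_left _ t tendsto_id
  refine ⟨nonempty_omegaLimit_of_isCompact_absorbing _ _ _ hC ⟨Ici 0, Ici_mem_atTop 0, habs⟩
    (singleton_nonempty x), fun w hw => hN w (hCN (hsub hw)) fun t => hCN (hsub (hinv t hw))⟩

theorem self_mem_negOrbit (x : M) : x ∈ negOrbit φ x :=
  ⟨0, le_rfl, φ.map_zero_apply x⟩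

theorem Flow.reverse_reverse : φ.reverse.reverse = φ :=
  Flow.ext fun t x => by simp

theorem omegaLim_reverse (x : M) : omegaLim φ.reverse x = alphaLim φ x := by
  have key (t : ℝ) :
      {y | ∃ s, t ≤ s ∧ φ.reverse s x = y} = {y | ∃ s, s ≤ -t ∧ φ s x = y} := by
    ext y
    constructor
    · rintro ⟨s, hs, rfl⟩
      exact ⟨-s, by linarith, rfl⟩
    · rintro ⟨s, hs, rfl⟩
      exact ⟨-s, by linarith, by simp⟩
  ext w
  simp only [omegaLim, alphaLim, mem_iInter₂, mem_Ioi, mem_Iio]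
  constructor
  · intro h t ht
    simpa only [key, neg_neg] using h (-t) (neg_pos.2 ht)
  · intro h t ht
    rw [key]
    exact h (-t) (neg_neg_iff_pos.2 ht)

theorem posOrbit_reverse (x : M) : posOrbit φ.reverse x = negOrbit φ x := by
  ext y
  constructor
  · rintro ⟨t, ht, rfl⟩
    exact ⟨-t, neg_nonpos.2 ht, rfl⟩
  · rintro ⟨t, ht, rfl⟩
    exact ⟨-t, neg_nonneg.2 ht, by simp⟩

theorem negOrbit_reverse (x : M) : negOrbit φ.reverse x = posOrbit φ x := by
  rw [← posOrbit_reverse, Flow.reverse_reverse]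

theorem Aset_reverse (K : Set M) : Aset φ.reverse K = Rset φ K := by
  simp only [Aset, Rset, omegaLim_reverse]

theorem Rset_reverse (K : Set M) : Rset φ.reverse K = Aset φ K := by
  rw [← Aset_reverse, Flow.reverse_reverse]

theorem Iset_reverse (K : Set M) : Iset φ.reverse K = Iset φ K := by
  rw [Iset, Iset, Aset_reverse, Rset_reverse, union_comm]

theorem mem_Rset_of_negOrbit_subset [T2Space M] {K N C : Set M}
    (hN : ∀ x ∈ N, (∀ t : ℝ, φ t x ∈ N) → x ∈ K) (hC : IsCompact C) (hCN : C ⊆ N) {x : M}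
    (hx : negOrbit φ x ⊆ C) : x ∈ Rset φ K := by
  rw [← Aset_reverse]
  refine mem_Aset_of_posOrbit_subset φ.reverse (fun y hy hyN => hN y hy fun t => ?_) hC hCN
    (by rwa [posOrbit_reverse])
  simpa using hyN (-t)

theorem Jplus_reverse (x : M) : Jplus φ.reverse x = Jminus φ x := by
  ext y
  constructor
  · rintro ⟨xs, ts, hxs, hts, hy⟩
    exact ⟨xs, fun n => -ts n, hxs, tendsto_neg_atTop_atBot.comp hts, hy⟩
  · rintro ⟨xs, ts, hxs, hts, hy⟩
    exact ⟨xs, fun n => -ts n, hxs, tendsto_neg_atBot_atTop.comp hts, by simpa using hy⟩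

theorem swap_mem_Jstar_reverse {x : M} {p : M × M} (hp : p ∈ Jstar φ x) :
    p.swap ∈ Jstar φ.reverse x := by
  obtain ⟨xs, ts, ss, hxs, hts, hss, h₁, h₂⟩ := hp
  exact ⟨xs, fun n => -ss n, fun n => -ts n, hxs, tendsto_neg_atBot_atTop.comp hss,
    tendsto_neg_atTop_atBot.comp hts, by simpa using h₂, by simpa using h₁⟩

variable {φ} {K : Set M}

theorem NonSaddle.reverse (h : NonSaddle φ K) : NonSaddle φ.reverse K := by
  intro U hU
  obtain ⟨V, hV, hVU, hVorb⟩ := h U hU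
  refine ⟨V, hV, hVU, fun x hx => ?_⟩
  rw [posOrbit_reverse, negOrbit_reverse]
  exact (hVorb x hx).symm

theorem IsIsolatedInv.reverse (h : IsIsolatedInv φ K) : IsIsolatedInv φ.reverse K := by
  obtain ⟨hK, hinv, N, hN, hKN, hmax⟩ := h
  refine ⟨hK, fun x hx t => hinv x hx (-t), N, hN, hKN, fun x hx hxN => hmax x hx fun t => ?_⟩
  simpa using hxN (-t)

theorem ExtDissonant.reverse {x : M} (h : ExtDissonant φ K x) : ExtDissonant φ.reverse K x := by
  obtain ⟨hxI, p, hp, hpK⟩ := h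
  exact ⟨by rwa [Iset_reverse], p.swap, swap_mem_Jstar_reverse φ hp, hpK.2, hpK.1⟩

theorem posDissonant_reverse_iff {x : M} :
    PosDissonant φ.reverse K x ↔ NegDissonant φ K x := by
  rw [PosDissonant, NegDissonant, Iset_reverse, Aset_reverse, Jplus_reverse]

end Orbits

theorem exists_isGreatest_mapsTo_Iic {X : Type*} [TopologicalSpace X] {γ : ℝ → X} {W : Set X}
    (hγ : Continuous γ) (hW : IsClosed W) {s b : ℝ} (hs : MapsTo γ (Iic s) W) (hb : γ b ∉ W) :
    ∃ ρ < b, IsGreatest {t | MapsTo γ (Iic t) W} ρ := by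
  set S := {t | MapsTo γ (Iic t) W}
  have hlt : ∀ t ∈ S, t < b := fun t ht => lt_of_not_ge fun hbt => hb (ht hbt)
  have hbdd : BddAbove S := ⟨b, fun t ht => (hlt t ht).le⟩
  have hmem : MapsTo γ (Iic (sSup S)) W := by
    have hIio : MapsTo γ (Iio (sSup S)) W := fun u hu =>
      let ⟨t, ht, hut⟩ := exists_lt_of_lt_csSup ⟨s, hs⟩ hu
      ht hut.le
    simpa only [closure_Iio, hW.closure_eq] using hIio.closure hγ
  exact ⟨sSup S, hlt _ hmem, hmem, fun t ht => le_csSup hbdd ht⟩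

section ExitTime

variable [TopologicalSpace M] (φ : Flow ℝ M) {W : Set M}

theorem negOrbit_flow_subset_iff (s : ℝ) (x : M) :
    negOrbit φ (φ s x) ⊆ W ↔ MapsTo (fun t => φ t x) (Iic s) W := by
  constructor
  · intro h t ht
    simpa [← Flow.map_add] using h ⟨t - s, sub_nonpos.2 ht, rfl⟩
  · rintro h _ ⟨t, ht, rfl⟩
    rw [← Flow.map_add]
    exact h (by simp only [mem_Iic]; linarith)

theorem pos_of_posOrbit_flow_subset {s : ℝ} {x : M} (h : posOrbit φ (φ s x) ⊆ W)
    (hx : x ∉ W) : 0 < s :=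
  lt_of_not_ge fun hs => hx <| by simpa [← Flow.map_add] using h ⟨-s, neg_nonneg.2 hs, rfl⟩

theorem exists_isGreatest_negOrbit_subset (hW : IsClosed W) {s : ℝ} {x : M}
    (hs : negOrbit φ (φ s x) ⊆ W) (hx : x ∉ W) :
    ∃ ρ < 0, IsGreatest {t | negOrbit φ (φ t x) ⊆ W} ρ := by
  simp_rw [negOrbit_flow_subset_iff] at hs ⊢
  exact exists_isGreatest_mapsTo_Iic (φ.continuous continuous_id continuous_const) hW hs
    (by simpa using hx)

theorem exists_flow_eq_of_tendsto [T2Space M] {xs : ℕ → M} {ρ : ℕ → ℝ} {x q : M} {a b : ℝ}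
    (hxs : Tendsto xs atTop (𝓝 x)) (hρ : ∃ᶠ n in atTop, ρ n ∈ Icc a b)
    (hq : Tendsto (fun n => φ (ρ n) (xs n)) atTop (𝓝 q)) : ∃ r, φ r x = q := by
  obtain ⟨r, -, g, hg, hρr⟩ := isCompact_Icc.tendsto_subseq' hρ
  exact ⟨r, tendsto_nhds_unique ((φ.cont'.tendsto (r, x)).comp
    (hρr.prodMk_nhds (hxs.comp hg.tendsto_atTop))) (hq.comp hg.tendsto_atTop)⟩

theorem notMem_Aset_of_tendsto_exit [T2Space M] {K U : Set M}
    (hU : ∀ p ∈ U, posOrbit φ p ⊆ W ∨ negOrbit φ p ⊆ W) (hKU : K ⊆ interior U)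
    {xs : ℕ → M} {ρ : ℕ → ℝ} {x q : M} (hx : x ∉ Aset φ K) (hxs : Tendsto xs atTop (𝓝 x))
    (hρ : ∀ᶠ n in atTop,
      xs n ∉ W ∧ ρ n ≤ 0 ∧ IsGreatest {t | negOrbit φ (φ t (xs n)) ⊆ W} (ρ n))
    (hq : Tendsto (fun n => φ (ρ n) (xs n)) atTop (𝓝 q)) : q ∉ Aset φ K := by
  intro hqA
  obtain ⟨T, hT, hTpos⟩ := ((frequently_flow_mem_of_mem_Aset φ hqA isOpen_interior hKU)
    |>.and_eventually (eventually_gt_atTop 0)).exists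
  have hρT : ∀ᶠ n in atTop, ρ n ∈ Icc (-T) 0 := by
    filter_upwards [hρ, ((φ.continuous_toFun T).tendsto q).comp hq (isOpen_interior.mem_nhds hT)]
      with n ⟨hxn, hρn, hρS⟩ hTρ
    have hTn : φ (T + ρ n) (xs n) ∈ U := by
      simpa [Flow.map_add] using interior_subset hTρ
    rcases hU _ hTn with hpos | hneg
    · exact ⟨by linarith [pos_of_posOrbit_flow_subset φ hpos hxn], hρn⟩
    · linarith [hρS.2 hneg]
  obtain ⟨r, rfl⟩ := exists_flow_eq_of_tendsto φ hxs hρT.frequently hq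
  exact hx ((flow_mem_Aset_iff φ r x).1 hqA)

end ExitTime

theorem ExtDissonant.exists_posDissonant [TopologicalSpace M] [T2Space M]
    [FirstCountableTopology M] [LocallyCompactSpace M] {φ : Flow ℝ M} {K : Set M}
    (hIso : IsIsolatedInv φ K) (hNS : NonSaddle φ K) {x : M} (hx : ExtDissonant φ K x) :
    ∃ q, PosDissonant φ K q := by
  obtain ⟨hK, -, N, hN, hKN, hmax⟩ := hIso
  obtain ⟨hxI, ⟨y, z⟩, ⟨xs, ts, ss, hxs, hts, hss, hy, hz⟩, hyK, hzK⟩ := hx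
  obtain ⟨V, hKV, hVN, hV⟩ := hNS N hKN
  obtain ⟨W, hW, hKW, hWV⟩ := exists_compact_between hK isOpen_interior hKV
  have hWN : W ⊆ N := (hWV.trans interior_subset).trans hVN
  have hxW : x ∉ W := fun hxW => hxI <| (hV x (interior_subset (hWV hxW))).imp
    (mem_Aset_of_posOrbit_subset φ hmax hN subset_rfl)
    (mem_Rset_of_negOrbit_subset φ hmax hN subset_rfl)
  obtain ⟨U, hKU, -, hU⟩ := hNS W hKW
  set S : ℕ → Set ℝ := fun n => {t | negOrbit φ (φ t (xs n)) ⊆ W}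
  set ρ : ℕ → ℝ := fun n => sSup (S n)
  have hρ : ∀ᶠ n in atTop, xs n ∉ W ∧ ρ n ≤ 0 ∧ IsGreatest (S n) (ρ n) := by
    filter_upwards [hxs (hW.isClosed.isOpen_compl.mem_nhds hxW),
      hz (isOpen_interior.mem_nhds (hKU hzK)), hss.eventually_le_atBot 0] with n hxn hzn hsn
    have hback : negOrbit φ (φ (ss n) (xs n)) ⊆ W :=
      (hU _ (interior_subset hzn)).resolve_left fun hpos =>
        (pos_of_posOrbit_flow_subset φ hpos hxn).not_ge hsn
    obtain ⟨r, hr, hrS⟩ := exists_isGreatest_negOrbit_subset φ hW.isClosed hback hxn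
    rw [show ρ n = r from hrS.csSup_eq]
    exact ⟨hxn, hr.le, hrS⟩
  obtain ⟨q, -, g, hg, hq⟩ :=
    hW.tendsto_subseq' (hρ.mono fun n hn => hn.2.2.1 (self_mem_negOrbit φ _)).frequently
  have hρg := hg.tendsto_atTop.eventually hρ
  refine ⟨q, Or.inr ?_, notMem_Aset_of_tendsto_exit φ hU hKU (fun hxA => hxI (Or.inl hxA))
    (hxs.comp hg.tendsto_atTop) hρg hq, y, ⟨_, fun n => ts (g n) - ρ (g n), hq, ?_, ?_⟩, hyK⟩
  · refine mem_Rset_of_negOrbit_subset φ hmax hW hWN ?_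
    rintro _ ⟨t, ht, rfl⟩
    exact hW.isClosed.mem_of_tendsto (((φ.continuous_toFun t).tendsto q).comp hq)
      (hρg.mono fun n hn => hn.2.2.1 ⟨t, ht, rfl⟩)
  · exact tendsto_atTop_mono' _ (hρg.mono fun n hn => (le_sub_self_iff _).2 hn.2.1)
      (hts.comp hg.tendsto_atTop)
  · simpa only [Function.comp_def, ← Flow.map_add, sub_add_cancel] using
      hy.comp hg.tendsto_atTop

/-- if `K` has an externally dissonant point, it has positively and
negatively dissonant points. -/
theorem stmt15 {M : Type*} [MetricSpace M] [LocallyCompactSpace M]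
    (φ : Flow ℝ M) (K : Set M)
    (hIso : IsIsolatedInv φ K) (hNS : NonSaddle φ K)
    (hext : ∃ x : M, ExtDissonant φ K x) :
    (∃ y : M, PosDissonant φ K y) ∧ (∃ z : M, NegDissonant φ K z) := by
  obtain ⟨x, hx⟩ := hext
  obtain ⟨z, hz⟩ := hx.reverse.exists_posDissonant hIso.reverse hNS.reverse
  exact ⟨hx.exists_posDissonant hIso hNS, z, posDissonant_reverse_iff.1 hz⟩
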